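/- Define polynomials 𝕋_m(x) with coefficients in ℚ(q) by 𝕋_m(x) := 0 for integers m ≤ 0 and 𝕋_{n+1}(x) := ∑_{k ≥ 0} QB_s(n-k, k) x^{k} for n ≥ 0. Then for every n ≥ 1 the q-s-bonacci recurrence 𝕋_{n+1}(x) = 𝕋_n(q x) + x · ∑_{j=1}^{s} 𝕋_{n-j}(q^{j} x) holds as an identity of polynomials in x over ℚ(q), where 𝕋_m(q^{j}x) denotes the polynomial 𝕋_m with x replaced by q^{j}x. -/
import Mathlib


/-- The q-quasi-bi^s-nomial coefficients `QB_s(n,k) ∈ ℚ(q)` (here `q = RatFunc.X`). -/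
noncomputable def QB (s : ℕ) : ℕ → ℤ → RatFunc ℚ
  | 0, k => if k = 0 then 1 else 0
  | n+1, k =>
    if k < 0 ∨ (n+1 : ℤ) < k then 0
    else QB s n k +
      ∑ j ∈ Finset.range s, if j ≤ n then RatFunc.X ^ (n - j) * QB s (n - j) (k - 1) else 0
  termination_by n _ => n
  decreasing_by all_goals omega

/-- `QB_s(n,k)` extended by zero to negative `n`. -/
noncomputable def QBZ (s : ℕ) (n k : ℤ) : RatFunc ℚ :=
  if n < 0 then 0 else QB s n.toNat k

open Finset

local notation "q" => (RatFunc.X : RatFunc ℚ)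

lemma qne : (RatFunc.X : RatFunc ℚ) ≠ 0 := RatFunc.X_ne_zero

lemma QB_neg (s : ℕ) (n : ℕ) (k : ℤ) (hk : k < 0) : QB s n k = 0 := by
  cases n with
  | zero => simp [QB]; omega
  | succ m => rw [QB]; simp [hk]

lemma QB_gt (s : ℕ) (n : ℕ) (k : ℤ) (hk : (n : ℤ) < k) : QB s n k = 0 := by
  cases n with
  | zero => simp [QB]; omega
  | succ m => rw [QB]; simp; omega

lemma QBZ_negm (s : ℕ) (m k : ℤ) (h : m < 0) : QBZ s m k = 0 := by simp [QBZ, h]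

lemma QBZ_negk (s : ℕ) (m k : ℤ) (h : k < 0) : QBZ s m k = 0 := by
  unfold QBZ; split
  · rfl
  · exact QB_neg s _ k h

lemma QBZ_gt (s : ℕ) (m k : ℤ) (h : m < k) : QBZ s m k = 0 := by
  unfold QBZ; split
  · rfl
  · exact QB_gt s _ k (by omega)

lemma Rrec (s : ℕ) (m k : ℤ) :
    QBZ s m k = QBZ s (m-1) k +
      (∑ j ∈ Icc 1 s, q ^ (m - j) * QBZ s (m - j) (k-1)) +
      (if m = 0 ∧ k = 0 then 1 else 0) := by
  rcases lt_or_ge m 0 with hm | hm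
  · rw [QBZ_negm _ _ _ hm, QBZ_negm _ _ _ (by omega), Finset.sum_eq_zero, if_neg (by omega)]
    · ring
    · intro j hj
      rw [QBZ_negm s _ _ (by simp at hj; omega), mul_zero]
  · rcases eq_or_lt_of_le hm with h0 | h1
    · subst h0
      have hQ : QBZ s 0 k = QB s 0 k := by simp [QBZ]
      rw [hQ, QBZ_negm _ _ _ (by omega), Finset.sum_eq_zero, QB]
      · split <;> simp_all <;> omega
      · intro j hj
        rw [QBZ_negm s _ _ (by simp at hj; omega), mul_zero]
    · obtain ⟨M, rfl⟩ : ∃ M : ℕ, m = (M:ℤ)+1 := ⟨(m-1).toNat, by omega⟩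
      have hQBZ : QBZ s ((M:ℤ)+1) k = QB s (M+1) k := by
        simp [QBZ, show ¬ ((M:ℤ)+1 < 0) by omega, show ((M:ℤ)+1).toNat = M+1 by omega]
      rw [hQBZ, QB]
      by_cases hk : k < 0 ∨ ((M:ℤ)+1) < k
      · rw [if_pos (by exact_mod_cast hk)]
        have h1 : QBZ s ((M:ℤ)+1-1) k = 0 := by
          rcases hk with hk | hk
          · exact QBZ_negk _ _ _ hk
          · exact QBZ_gt _ _ _ (by omega)
        rw [h1, Finset.sum_eq_zero, if_neg (by omega)]
        · ring
        · intro j hj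
          simp only [Finset.mem_Icc] at hj
          rcases hk with hk | hk
          · rw [QBZ_negk _ _ _ (by omega), mul_zero]
          · rw [QBZ_gt _ _ _ (by omega), mul_zero]
      · rw [if_neg (by exact_mod_cast hk)]
        have h1 : QBZ s ((M:ℤ)+1-1) k = QB s M k := by
          simp [QBZ, show ¬ ((M:ℤ)+1-1 < 0) by omega, show ((M:ℤ)+1-1).toNat = M by omega]
        rw [h1, if_neg (by omega), add_zero]
        congr 1
        rw [← Finset.Ico_add_one_right_eq_Icc, Finset.sum_Ico_eq_sum_range]
        apply Finset.sum_congr (by norm_num)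
        intro j hj
        simp only [Finset.mem_range] at hj
        by_cases hjM : j ≤ M
        · rw [if_pos hjM]
          have e1 : (M:ℤ)+1-((1+j:ℕ):ℤ) = ((M - j : ℕ) : ℤ) := by
            push_cast [Nat.cast_sub hjM]; ring
          rw [e1]
          have e2 : QBZ s ((M-j : ℕ) : ℤ) (k-1) = QB s (M-j) (k-1) := by
            simp [QBZ]
          rw [e2, zpow_natCast]
        · rw [if_neg hjM, QBZ_negm s _ _ (by push_cast; omega), mul_zero]

lemma Star_le0 (s : ℕ) (m k : ℤ) (hm : m ≤ 0) :
    QBZ s m k = q ^ k * QBZ s (m-1) k +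
      (∑ j ∈ Icc 1 s, q ^ ((j:ℤ) * (k-1)) * QBZ s (m - j) (k-1)) +
      (if m = 0 ∧ k = 0 then 1 else 0) := by
  rw [QBZ_negm _ _ _ (show m - 1 < 0 by omega), Finset.sum_eq_zero]
  · rcases lt_or_eq_of_le hm with hm | hm
    · rw [QBZ_negm _ _ _ hm, if_neg (by omega)]; ring
    · subst hm
      have : QBZ s 0 k = QB s 0 k := by simp [QBZ]
      rw [this, QB]
      split <;> simp_all
  · intro j hj
    rw [QBZ_negm s _ _ (by simp at hj; omega), mul_zero]

lemma QB_star (s : ℕ) (m k : ℤ) :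
    QBZ s m k = q ^ k * QBZ s (m-1) k +
      (∑ j ∈ Icc 1 s, q ^ ((j:ℤ) * (k-1)) * QBZ s (m - j) (k-1)) +
      (if m = 0 ∧ k = 0 then 1 else 0) := by
  have main : ∀ M : ℕ, ∀ m k : ℤ, m ≤ M →
      QBZ s m k = q ^ k * QBZ s (m-1) k +
        (∑ j ∈ Icc 1 s, q ^ ((j:ℤ) * (k-1)) * QBZ s (m - j) (k-1)) +
        (if m = 0 ∧ k = 0 then 1 else 0) := by
    intro M
    induction M with
    | zero => intro m k hm; exact Star_le0 s m k (by exact_mod_cast hm)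
    | succ N IH =>
      intro m k hm
      rcases le_or_gt m N with h | h
      · exact IH m k h
      · have hm1 : 1 ≤ m := by omega
        have IH' : ∀ m' k' : ℤ, m' ≤ m - 1 →
            QBZ s m' k' = q ^ k' * QBZ s (m'-1) k' +
              (∑ j ∈ Icc 1 s, q ^ ((j:ℤ) * (k'-1)) * QBZ s (m' - j) (k'-1)) +
              (if m' = 0 ∧ k' = 0 then 1 else 0) := by
          intro m' k' h'
          exact IH m' k' (by omega)
        rw [if_neg (by omega), add_zero]
        calc QBZ s m k
            = QBZ s (m-1) k + (∑ j ∈ Icc 1 s, q^(m-j) * QBZ s (m-j) (k-1)) := by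
              rw [Rrec s m k, if_neg (by omega), add_zero]
          _ = (q^k * QBZ s (m-1-1) k +
                (∑ i ∈ Icc 1 s, q^((i:ℤ)*(k-1)) * QBZ s (m-1-i) (k-1)) +
                (if m-1 = 0 ∧ k = 0 then 1 else 0))
              + ∑ j ∈ Icc 1 s, q^(m-j) *
                  (q^(k-1) * QBZ s (m-j-1) (k-1) +
                   (∑ i ∈ Icc 1 s, q^((i:ℤ)*(k-1-1)) * QBZ s (m-j-i) (k-1-1)) +
                   (if m-j = 0 ∧ k-1 = 0 then 1 else 0)) := by
              rw [← IH' (m-1) k le_rfl]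
              congr 1
              apply Finset.sum_congr rfl
              intro j hj
              simp only [Finset.mem_Icc] at hj
              rw [← IH' (m-j) (k-1) (by omega)]
          _ = q^k * (QBZ s (m-1-1) k +
                (∑ i ∈ Icc 1 s, q^(m-1-i) * QBZ s (m-1-i) (k-1)) +
                (if m-1 = 0 ∧ k = 0 then 1 else 0))
              + ∑ j ∈ Icc 1 s, q^((j:ℤ)*(k-1)) *
                  (QBZ s (m-j-1) (k-1) +
                   (∑ i ∈ Icc 1 s, q^(m-j-i) * QBZ s (m-j-i) (k-1-1)) +
                   (if m-j = 0 ∧ k-1 = 0 then 1 else 0)) := by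
              have ha : (∑ i ∈ Icc 1 s, q^((i:ℤ)*(k-1)) * QBZ s (m-1-i) (k-1))
                  = ∑ j ∈ Icc 1 s, q^((j:ℤ)*(k-1)) * QBZ s (m-j-1) (k-1) := by
                apply Finset.sum_congr rfl; intro j _
                rw [show m-1-(j:ℤ) = m-j-1 by ring]
              have hb : (if m-1 = 0 ∧ k = 0 then (1 : RatFunc ℚ) else 0)
                  = q^k * (if m-1 = 0 ∧ k = 0 then 1 else 0) := by
                split
                · next hcond => rw [hcond.2]; norm_num
                · simp
              have hc : (∑ j ∈ Icc 1 s, q^(m-j) * (q^(k-1) * QBZ s (m-j-1) (k-1)))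
                  = q^k * (∑ i ∈ Icc 1 s, q^(m-1-i) * QBZ s (m-1-i) (k-1)) := by
                rw [Finset.mul_sum]
                apply Finset.sum_congr rfl; intro j _
                rw [show m-1-(j:ℤ) = m-j-1 by ring, ← mul_assoc, ← mul_assoc,
                  ← zpow_add₀ qne, ← zpow_add₀ qne]
                congr 1
                ring
              have hd : (∑ j ∈ Icc 1 s, q^(m-j) *
                    (∑ i ∈ Icc 1 s, q^((i:ℤ)*(k-1-1)) * QBZ s (m-j-i) (k-1-1)))
                  = ∑ j ∈ Icc 1 s, q^((j:ℤ)*(k-1)) *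
                    (∑ i ∈ Icc 1 s, q^(m-j-i) * QBZ s (m-j-i) (k-1-1)) := by
                simp_rw [Finset.mul_sum]
                rw [Finset.sum_comm]
                apply Finset.sum_congr rfl; intro a _
                apply Finset.sum_congr rfl; intro b _
                rw [show m-(b:ℤ)-a = m-a-b by ring, ← mul_assoc, ← mul_assoc,
                  ← zpow_add₀ qne, ← zpow_add₀ qne]
                congr 1
                ring
              have he : (∑ j ∈ Icc 1 s, q^(m-j) * (if m-(j:ℤ) = 0 ∧ k-1 = 0 then (1:RatFunc ℚ) else 0))
                  = ∑ j ∈ Icc 1 s, q^((j:ℤ)*(k-1)) * (if m-(j:ℤ) = 0 ∧ k-1 = 0 then 1 else 0) := by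
                apply Finset.sum_congr rfl; intro j _
                split
                · next hcond => rw [hcond.1, show (j:ℤ)*(k-1) = 0 by rw [hcond.2, mul_zero]]
                · simp
              simp only [mul_add, Finset.sum_add_distrib]
              linear_combination ha + hb + hc + hd + he
          _ = q^k * QBZ s (m-1) k + ∑ j ∈ Icc 1 s, q^((j:ℤ)*(k-1)) * QBZ s (m-j) (k-1) := by
              rw [← Rrec s (m-1) k]
              congr 1
              apply Finset.sum_congr rfl
              intro j hj
              rw [← Rrec s (m-j) (k-1)]
  rcases le_or_gt m 0 with hm | hm
  · exact Star_le0 s m k hm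
  · exact main m.toNat m k (by omega)


/-- The polynomials `𝕋_m(x)` over `ℚ(q)`: `𝕋_m = 0` for `m ≤ 0` and
`𝕋_{n+1}(x) = ∑_{k ≥ 0} QB_s(n-k,k) x^k` for `n ≥ 0` (a finite sum). -/
noncomputable def TT (s : ℕ) (m : ℤ) : Polynomial (RatFunc ℚ) :=
  if m ≤ 0 then 0
  else ∑ᶠ k : ℕ, Polynomial.C (QBZ s (m - 1 - k) (k : ℤ)) * Polynomial.X ^ k

lemma TT_formula (s : ℕ) (m : ℤ) (N : ℕ) (hm : m ≤ (N:ℤ) + 1) :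
    TT s m = ∑ k ∈ range (N+1),
      Polynomial.C (QBZ s (m-1-k) (k:ℤ)) * Polynomial.X ^ k := by
  unfold TT
  split
  · next h =>
    symm
    apply Finset.sum_eq_zero
    intro k _
    rw [QBZ_negm s _ _ (by omega), map_zero, zero_mul]
  · next h =>
    apply finsum_eq_sum_of_support_subset
    intro k hk
    simp only [Function.mem_support, ne_eq] at hk
    simp only [Finset.coe_range, Set.mem_Iio]
    by_contra hc
    apply hk
    rw [QBZ_negm s _ _ (by omega), map_zero, zero_mul]

lemma comp_sum (N : ℕ) (a : ℕ → RatFunc ℚ) (c : RatFunc ℚ) :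
    (∑ k ∈ range N, Polynomial.C (a k) * Polynomial.X ^ k).comp
        (Polynomial.C c * Polynomial.X)
    = ∑ k ∈ range N, Polynomial.C (a k * c ^ k) * Polynomial.X ^ k := by
  rw [Polynomial.comp, Polynomial.eval₂_finset_sum]
  apply Finset.sum_congr rfl
  intro k _
  rw [Polynomial.eval₂_mul, Polynomial.eval₂_C, Polynomial.eval₂_X_pow, mul_pow,
    ← Polynomial.C_pow, map_mul]
  ring


/-- The q-s-bonacci recurrence: for every `n ≥ 1`,
`𝕋_{n+1}(x) = 𝕋_n(qx) + x ∑_{j=1}^{s} 𝕋_{n-j}(q^j x)` as polynomials over `ℚ(q)`. -/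
theorem qsbonacci_recurrence (s : ℕ) (hs : 1 ≤ s) (n : ℕ) (hn : 1 ≤ n) :
    TT s ((n : ℤ) + 1) =
      (TT s (n : ℤ)).comp (Polynomial.C (RatFunc.X : RatFunc ℚ) * Polynomial.X) +
        Polynomial.X *
          ∑ j ∈ Finset.Icc 1 s,
            (TT s ((n : ℤ) - j)).comp
              (Polynomial.C ((RatFunc.X : RatFunc ℚ) ^ j) * Polynomial.X) := by
  rw [TT_formula s ((n:ℤ)+1) (n+1) (by push_cast; omega),
      TT_formula s (n:ℤ) (n+1) (by push_cast; omega)]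
  have hTT : ∀ j ∈ Icc 1 s,
      (TT s ((n:ℤ) - j)).comp (Polynomial.C (q ^ j) * Polynomial.X)
      = ∑ k ∈ range (n+1),
          Polynomial.C (QBZ s ((n:ℤ)-j-1-k) (k:ℤ) * (q^j)^k) * Polynomial.X ^ k := by
    intro j hj
    rw [TT_formula s ((n:ℤ)-j) n (by simp at hj; omega), comp_sum]
  rw [Finset.sum_congr rfl hTT, comp_sum, Finset.mul_sum]
  simp_rw [Finset.mul_sum]
  rw [Finset.sum_comm]
  simp_rw [show ∀ (a : Polynomial (RatFunc ℚ)) (k : ℕ),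
      Polynomial.X * (a * Polynomial.X ^ k) = a * Polynomial.X ^ (k+1) from
    fun a k => by ring]
  rw [Finset.sum_range_succ' (fun k => Polynomial.C (QBZ s ((n:ℤ)+1-1-k) (k:ℤ)) * Polynomial.X ^ k) (n+1),
     Finset.sum_range_succ' (fun k => Polynomial.C (QBZ s ((n:ℤ)-1-k) (k:ℤ) * q^k) * Polynomial.X ^ k) (n+1)]
  rw [add_right_comm, ← Finset.sum_add_distrib]
  congr 1
  · apply Finset.sum_congr rfl
    intro k _
    rw [← Finset.sum_mul, ← map_sum, ← add_mul, ← map_add]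
    congr 2
    have h := QB_star s ((n:ℤ)-(k+1)) ((k:ℤ)+1)
    rw [if_neg (by omega), add_zero] at h
    have e1 : (n:ℤ)+1-1-((k+1:ℕ):ℤ) = (n:ℤ)-(k+1) := by push_cast; ring
    have e2 : (n:ℤ)-1-((k+1:ℕ):ℤ) = (n:ℤ)-(k+1)-1 := by push_cast; ring
    have e3 : (((k+1:ℕ)):ℤ) = (k:ℤ)+1 := by push_cast; ring
    rw [e1, e2, e3, h]
    have e4 : q ^ ((k:ℤ)+1) = q ^ (k+1 : ℕ) := by
      rw [show ((k:ℤ)+1) = ((k+1:ℕ):ℤ) by push_cast; ring, zpow_natCast]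
    rw [e4, mul_comm]
    congr 1
    apply Finset.sum_congr rfl
    intro j _
    have e5 : q ^ ((j:ℤ)*((k:ℤ)+1-1)) = (q^j)^k := by
      rw [show ((j:ℤ)*((k:ℤ)+1-1)) = ((j*k : ℕ):ℤ) by push_cast; ring, zpow_natCast,
        pow_mul]
    rw [e5, mul_comm]
    congr 2 <;> ring
  · congr 1
    have h0 : QBZ s (n:ℤ) 0 = QBZ s ((n:ℤ)-1) 0 := by
      rw [Rrec s (n:ℤ) 0, if_neg (by omega), add_zero, Finset.sum_eq_zero, add_zero]
      intro j _
      rw [QBZ_negk s _ _ (by norm_num), mul_zero]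
    push_cast
    simp only [sub_zero, pow_zero, mul_one]
    rw [show (n:ℤ)+1-1 = (n:ℤ) by ring]
    exact congrArg _ h0
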